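/- With Δ(β,J_A) = e_A(β,J_A) + J_A tanh(βJ_A) and J_A ≠ 0, the sum satisfies Δ(β,J_A) + Δ(β,−J_A) = (sinh(2βJ_A)/J_A)·Δ(β,J_A)² / (1 + (sinh(2βJ_A)/J_A)·Δ(β,J_A)), and in particular for β > 0 and any J_A ≠ 0, Δ(β,J_A) + Δ(β,−J_A) ≥ 0. -/

import Mathlib

open Finset Real

/-- Spin value of a Boolean spin variable: `true ↦ 1`, `false ↦ -1`. -/
def spin (b : Bool) : ℝ := if b then 1 else -1

/-- Energy of a finite Ising system: `H(S) = -∑_{A ⊆ V} J_A ∏_{i ∈ A} S_i`. -/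
noncomputable def energy {V : Type*} [Fintype V] [DecidableEq V]
    (J : Finset V → ℝ) (S : V → Bool) : ℝ :=
  -∑ A : Finset V, J A * ∏ i ∈ A, spin (S i)

/-- Partition function `Z(β, J) = ∑_S exp (-β H(S))`. -/
noncomputable def Z {V : Type*} [Fintype V] [DecidableEq V]
    (β : ℝ) (J : Finset V → ℝ) : ℝ :=
  ∑ S : V → Bool, Real.exp (-β * energy J S)

/-- Thermal average `⟨f⟩_β = Z⁻¹ ∑_S f(S) exp (-β H(S))`. -/
noncomputable def texp {V : Type*} [Fintype V] [DecidableEq V]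
    (β : ℝ) (J : Finset V → ℝ) (f : (V → Bool) → ℝ) : ℝ :=
  (∑ S : V → Bool, f S * Real.exp (-β * energy J S)) / Z β J

/-- Thermal average of the local energy of subset `A`:
`e_A(β, J_A) = -⟨J_A ∏_{i ∈ A} S_i⟩_β`. -/
noncomputable def eA {V : Type*} [Fintype V] [DecidableEq V]
    (β : ℝ) (J : Finset V → ℝ) (A : Finset V) : ℝ :=
  texp β J (fun S => -(J A * ∏ i ∈ A, spin (S i)))

/-- Deviation of the local energy from its isolated value:
`Δ(β, J_A) = e_A(β, J_A) + J_A tanh (β J_A)`. -/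
noncomputable def Δ {V : Type*} [Fintype V] [DecidableEq V]
    (β : ℝ) (J : Finset V → ℝ) (A : Finset V) : ℝ :=
  eA β J A + J A * Real.tanh (β * J A)

/-- Couplings with the single coupling `J_A` negated. -/
noncomputable def flipJ {V : Type*} [DecidableEq V]
    (J : Finset V → ℝ) (A : Finset V) : Finset V → ℝ :=
  Function.update J A (-(J A))

/-!
Write `K = ∏_{i ∈ A} S_i = ±1`, so that `exp (β J_A K) = cosh (β J_A) + K sinh (β J_A)`. Relative to
the system with `J_A` switched off, with partition function `Z₀` and `m = ⟨K⟩₀` (`decoupledCorr`),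
this gives `Z(J_A) = Z₀ (cosh + m sinh)` and `Δ(J_A) Z(J_A) = -J_A Z₀ m / cosh`, using
`cosh² - sinh² = 1`. Hence `Δ Z` is odd in `J_A`, and
`Z(-J_A) / Z(J_A) = 1 + (sinh (2βJ_A) / J_A) Δ(J_A)`. The two facts together give
`Δ(-J_A) = -Δ(J_A) / (1 + (sinh (2βJ_A) / J_A) Δ(J_A))`, which is the formula, and the
denominator is a ratio of partition functions, hence positive.
-/

lemma spin_sq (b : Bool) : spin b ^ 2 = 1 := by
  cases b <;> norm_num [spin]

lemma prod_spin_sq {V : Type*} (A : Finset V) (S : V → Bool) :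
    (∏ i ∈ A, spin (S i)) ^ 2 = 1 := by
  rw [← Finset.prod_pow]
  simp [spin_sq]

lemma exp_mul_of_sq_eq_one {K : ℝ} (hK : K ^ 2 = 1) (t : ℝ) :
    exp (t * K) = cosh t + K * sinh t := by
  rcases sq_eq_one_iff.1 hK with rfl | rfl
  · simp [cosh_add_sinh]
  · rw [mul_neg_one, ← cosh_sub_sinh]
    ring

lemma sinh_mul_div_pos {c x : ℝ} (hc : 0 < c) (hx : x ≠ 0) : 0 < sinh (c * x) / x := by
  rcases hx.lt_or_gt with hx | hx
  · exact div_pos_of_neg_of_neg (sinh_neg_iff.2 (mul_neg_of_pos_of_neg hc hx)) hx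
  · exact div_pos (sinh_pos_iff.2 (mul_pos hc hx)) hx

lemma flipJ_self {V : Type*} [DecidableEq V] (J : Finset V → ℝ) (A : Finset V) :
    flipJ J A A = -J A :=
  Function.update_self _ _ _

lemma update_flipJ {V : Type*} [DecidableEq V] (J : Finset V → ℝ) (A : Finset V) :
    Function.update (flipJ J A) A 0 = Function.update J A 0 :=
  Function.update_idem _ _ _

section Ising

variable {V : Type*} [Fintype V] [DecidableEq V]

lemma Z_pos (β : ℝ) (J : Finset V → ℝ) : 0 < Z β J :=
  Finset.sum_pos (fun _ _ => exp_pos _) Finset.univ_nonempty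

lemma energy_eq_add_energy_update (J : Finset V → ℝ) (A : Finset V) (S : V → Bool) :
    energy J S = -(J A * ∏ i ∈ A, spin (S i)) + energy (Function.update J A 0) S := by
  simp only [energy, Fintype.sum_eq_add_sum_compl A, Function.update_self, zero_mul, zero_add]
  have hrest : ∑ B ∈ {A}ᶜ, Function.update J A 0 B * ∏ i ∈ B, spin (S i) =
      ∑ B ∈ {A}ᶜ, J B * ∏ i ∈ B, spin (S i) :=
    Finset.sum_congr rfl fun B hB => by
      rw [Function.update_of_ne (Finset.mem_compl.1 hB <| Finset.mem_singleton.2 ·)]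
  rw [hrest]
  ring

lemma exp_energy_eq (β : ℝ) (J : Finset V → ℝ) (A : Finset V) (S : V → Bool) :
    exp (-β * energy J S) = (cosh (β * J A) + (∏ i ∈ A, spin (S i)) * sinh (β * J A)) *
      exp (-β * energy (Function.update J A 0) S) := by
  rw [energy_eq_add_energy_update J A S, mul_add, exp_add,
    show -β * -(J A * ∏ i ∈ A, spin (S i)) = β * J A * ∏ i ∈ A, spin (S i) by ring,
    exp_mul_of_sq_eq_one (prod_spin_sq A S)]

noncomputable def decoupledCorr (β : ℝ) (J : Finset V → ℝ) (A : Finset V) : ℝ :=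
  texp β (Function.update J A 0) fun S => ∏ i ∈ A, spin (S i)

variable (β : ℝ) (J : Finset V → ℝ) (A : Finset V)

lemma sum_prod_spin_mul_exp_update :
    ∑ S, (∏ i ∈ A, spin (S i)) * exp (-β * energy (Function.update J A 0) S) =
      Z β (Function.update J A 0) * decoupledCorr β J A :=
  (mul_div_cancel₀ _ (Z_pos β _).ne').symm

lemma Z_eq_mul_decoupledCorr :
    Z β J = Z β (Function.update J A 0) *
      (cosh (β * J A) + sinh (β * J A) * decoupledCorr β J A) := by
  have hsplit : Z β J = cosh (β * J A) * Z β (Function.update J A 0) + sinh (β * J A) *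
      ∑ S, (∏ i ∈ A, spin (S i)) * exp (-β * energy (Function.update J A 0) S) := by
    rw [Z, Z, Finset.mul_sum, Finset.mul_sum, ← Finset.sum_add_distrib]
    exact Finset.sum_congr rfl fun S _ => by rw [exp_energy_eq β J A]; ring
  rw [hsplit, sum_prod_spin_mul_exp_update]
  ring

lemma sum_prod_spin_mul_exp :
    ∑ S, (∏ i ∈ A, spin (S i)) * exp (-β * energy J S) = Z β (Function.update J A 0) *
      (cosh (β * J A) * decoupledCorr β J A + sinh (β * J A)) := by
  have hsplit : ∑ S, (∏ i ∈ A, spin (S i)) * exp (-β * energy J S) = cosh (β * J A) *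
      ∑ S, (∏ i ∈ A, spin (S i)) * exp (-β * energy (Function.update J A 0) S) +
      sinh (β * J A) * Z β (Function.update J A 0) := by
    rw [Z, Finset.mul_sum, Finset.mul_sum, ← Finset.sum_add_distrib]
    exact Finset.sum_congr rfl fun S _ => by
      rw [exp_energy_eq β J A]
      linear_combination sinh (β * J A) * exp (-β * energy (Function.update J A 0) S) *
        prod_spin_sq A S
  rw [hsplit, sum_prod_spin_mul_exp_update]
  ring

lemma Delta_mul_Z :
    Δ β J A * Z β J = -(J A) * Z β (Function.update J A 0) * decoupledCorr β J A /
      cosh (β * J A) := by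
  have hc := (cosh_pos (β * J A)).ne'
  have hnum : ∑ S, -(J A * ∏ i ∈ A, spin (S i)) * exp (-β * energy J S) =
      -(J A) * ∑ S, (∏ i ∈ A, spin (S i)) * exp (-β * energy J S) := by
    simp only [Finset.mul_sum, neg_mul, mul_assoc]
  rw [Δ, eA, texp, add_mul, div_mul_cancel₀ _ (Z_pos β J).ne', hnum, sum_prod_spin_mul_exp,
    Z_eq_mul_decoupledCorr β J A, tanh_eq_sinh_div_cosh]
  have hcs := cosh_sq_sub_sinh_sq (β * J A)
  generalize cosh (β * J A) = c at hc hcs ⊢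
  generalize sinh (β * J A) = s at hcs ⊢
  field_simp
  linear_combination (-(J A) * Z β (Function.update J A 0) * decoupledCorr β J A) * hcs

lemma decoupledCorr_flipJ : decoupledCorr β (flipJ J A) A = decoupledCorr β J A := by
  rw [decoupledCorr, decoupledCorr, update_flipJ]

lemma Delta_mul_Z_flipJ : Δ β (flipJ J A) A * Z β (flipJ J A) = -(Δ β J A * Z β J) := by
  rw [Delta_mul_Z, Delta_mul_Z, flipJ_self, update_flipJ, decoupledCorr_flipJ, mul_neg, cosh_neg]
  ring

lemma Z_flipJ_div_Z (hJ : J A ≠ 0) :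
    Z β (flipJ J A) / Z β J = 1 + sinh (2 * β * J A) / J A * Δ β J A := by
  have hZ := (Z_pos β J).ne'
  have hden := Z_eq_mul_decoupledCorr β J A ▸ hZ
  have hZ₀ := (Z_pos β (Function.update J A 0)).ne'
  have hc := (cosh_pos (β * J A)).ne'
  rw [← mul_div_cancel_right₀ (Δ β J A) hZ, Delta_mul_Z, Z_eq_mul_decoupledCorr β (flipJ J A) A,
    Z_eq_mul_decoupledCorr β J A, flipJ_self, update_flipJ, decoupledCorr_flipJ, mul_neg,
    cosh_neg, sinh_neg, mul_assoc 2, sinh_two_mul]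
  generalize Z β (Function.update J A 0) = Z₀ at hZ₀ hden ⊢
  generalize cosh (β * J A) = c at hc hden ⊢
  field_simp [right_ne_zero_of_mul hden]
  ring

end Ising

/-- formula for `Δ(β,J_A) + Δ(β,-J_A)` and its nonnegativity
for `β > 0`. -/
theorem Delta_sum_formula {V : Type*} [Fintype V] [DecidableEq V]
    (β : ℝ) (J : Finset V → ℝ) (A : Finset V) (hJ : J A ≠ 0) :
    Δ β J A + Δ β (flipJ J A) A =
      Real.sinh (2 * β * J A) / J A * (Δ β J A) ^ 2 /
        (1 + Real.sinh (2 * β * J A) / J A * Δ β J A) ∧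
    (0 < β → 0 ≤ Δ β J A + Δ β (flipJ J A) A) := by
  set a := sinh (2 * β * J A) / J A
  have hratio : Z β (flipJ J A) / Z β J = 1 + a * Δ β J A := Z_flipJ_div_Z β J A hJ
  have hpos : 0 < 1 + a * Δ β J A := hratio ▸ div_pos (Z_pos _ _) (Z_pos _ _)
  have hflip : Δ β (flipJ J A) A = -Δ β J A / (1 + a * Δ β J A) := by
    rw [← hratio, eq_div_iff (hratio ▸ hpos.ne'), mul_div_assoc', Delta_mul_Z_flipJ,
      neg_div, mul_div_cancel_right₀ _ (Z_pos β J).ne']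
  have hsum : Δ β J A + Δ β (flipJ J A) A = a * Δ β J A ^ 2 / (1 + a * Δ β J A) := by
    rw [hflip, eq_div_iff hpos.ne', add_mul, div_mul_cancel₀ _ hpos.ne']
    ring
  refine ⟨hsum, fun hβ => hsum ▸ ?_⟩
  have ha : 0 < a := sinh_mul_div_pos (by positivity) hJ
  positivity
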